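/- arXiv:1507.08237 — 2 statements merged into one kernel-verified Lean document; each statement's English description precedes it below -/
import Mathlib

section
/- (Sufficiency in Theorem 3.1.) Under the lens setting below, suppose $\partial e_2/\partial x_1 = \partial e_1/\partial x_2$ on $\Omega$, let $h:\Omega\to\mathbb{R}$ satisfy $\nabla h = (e_1,e_2)$, let $C$ be any constant, and define $d(x) = \dfrac{C - h(x) + e(x)\cdot(x,0) - \big(e(x)-\kappa_1\kappa_2 w\big)\cdot P(x)}{\kappa_1 - \kappa_2\, w\cdot\big(e(x) - \lambda_1(x)\nu_1(x)\big)}$. Then the denominator satisfies $\kappa_1 - \kappa_2\, w\cdot(e(x)-\lambda_1(x)\nu_1(x)) \ge \kappa_1(1-\kappa_2) > 0$, $d$ is $C^1$ on $\Omega$, and the map $f(x) = P(x) + d(x)\,m_1(x)$ satisfies $\big(e(x) - \lambda_1(x)\nu_1(x) - \kappa_1\kappa_2 w\big)\cdot \partial f/\partial x_i = 0$ on $\Omega$ for $i=1,2$. -/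
noncomputable section

/-- Euclidean inner product in `ℝ³`. -/
def dot3 (x y : Fin 3 → ℝ) : ℝ := x 0 * y 0 + x 1 * y 1 + x 2 * y 2

/-- Euclidean norm in `ℝ³`. -/
def norm3 (x : Fin 3 → ℝ) : ℝ := Real.sqrt (dot3 x x)

/-- Euclidean inner product in `ℝ²`. -/
def dot2 (x y : Fin 2 → ℝ) : ℝ := x 0 * y 0 + x 1 * y 1

/-- Euclidean norm in `ℝ²`. -/
def norm2 (x : Fin 2 → ℝ) : ℝ := Real.sqrt (dot2 x x)

/-- The embedding `x = (x₁,x₂) ↦ (x₁,x₂,0)` of the source plane into `ℝ³`. -/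
def lift2 (x : Fin 2 → ℝ) : Fin 3 → ℝ := ![x 0, x 1, 0]

/-- Cross product in `ℝ³`. -/
def cross3 (x y : Fin 3 → ℝ) : Fin 3 → ℝ :=
  ![x 1 * y 2 - x 2 * y 1, x 2 * y 0 - x 0 * y 2, x 0 * y 1 - x 1 * y 0]

/-- Partial derivative `∂f/∂xᵢ` of a scalar function on `ℝ²`. -/
def pd (i : Fin 2) (f : (Fin 2 → ℝ) → ℝ) (x : Fin 2 → ℝ) : ℝ :=
  fderiv ℝ f x (Pi.single i 1)

/-- Gradient of a scalar function on `ℝ²`. -/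
def grad2 (f : (Fin 2 → ℝ) → ℝ) (x : Fin 2 → ℝ) : Fin 2 → ℝ :=
  ![pd 0 f x, pd 1 f x]

/-- Two-dimensional curl of a plane field: `curl V = ∂V₂/∂x₁ - ∂V₁/∂x₂`. -/
def curl2 (V : (Fin 2 → ℝ) → (Fin 2 → ℝ)) (x : Fin 2 → ℝ) : ℝ :=
  pd 0 (fun y => V y 1) x - pd 1 (fun y => V y 0) x

/-- Two-dimensional cross product `a × b = a₁b₂ - a₂b₁`. -/
def cross2v (a b : Fin 2 → ℝ) : ℝ := a 0 * b 1 - a 1 * b 0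

end

private lemma dot3_sq_le (a b : Fin 3 → ℝ) : (dot3 a b)^2 ≤ dot3 a a * dot3 b b := by
  simp only [dot3]
  nlinarith [sq_nonneg (a 0*b 1 - a 1*b 0), sq_nonneg (a 0*b 2 - a 2*b 0),
    sq_nonneg (a 1*b 2 - a 2*b 1)]

private lemma dot3_self_of_norm3 (a : Fin 3 → ℝ) (h : norm3 a = 1) : dot3 a a = 1 := by
  have h0 : (0:ℝ) ≤ dot3 a a := by
    simp only [dot3]; nlinarith [sq_nonneg (a 0), sq_nonneg (a 1), sq_nonneg (a 2)]
  have h2 := congrArg (fun t : ℝ => t^2) h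
  simpa [norm3, Real.sq_sqrt h0] using h2

private lemma Dmul {a b : (Fin 2 → ℝ) → ℝ} {x v : Fin 2 → ℝ}
    (ha : DifferentiableAt ℝ a x) (hb : DifferentiableAt ℝ b x) :
    fderiv ℝ (fun y => a y * b y) x v = a x * fderiv ℝ b x v + b x * fderiv ℝ a x v := by
  rw [fderiv_fun_mul ha hb]; simp

private lemma Dadd {a b : (Fin 2 → ℝ) → ℝ} {x v : Fin 2 → ℝ}
    (ha : DifferentiableAt ℝ a x) (hb : DifferentiableAt ℝ b x) :
    fderiv ℝ (fun y => a y + b y) x v = fderiv ℝ a x v + fderiv ℝ b x v := by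
  rw [fderiv_fun_add ha hb]; simp

private lemma Dsub {a b : (Fin 2 → ℝ) → ℝ} {x v : Fin 2 → ℝ}
    (ha : DifferentiableAt ℝ a x) (hb : DifferentiableAt ℝ b x) :
    fderiv ℝ (fun y => a y - b y) x v = fderiv ℝ a x v - fderiv ℝ b x v := by
  rw [fderiv_fun_sub ha hb]; simp

private lemma Dcoord (k : Fin 2) (x v : Fin 2 → ℝ) :
    fderiv ℝ (fun y : Fin 2 → ℝ => y k) x v = v k := by
  rw [show fderiv ℝ (fun y : Fin 2 → ℝ => y k) x = ContinuousLinearMap.proj k from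
    (ContinuousLinearMap.proj k : (Fin 2 → ℝ) →L[ℝ] ℝ).fderiv]
  rfl

private lemma dcoord (k : Fin 2) (x : Fin 2 → ℝ) :
    DifferentiableAt ℝ (fun y : Fin 2 → ℝ => y k) x :=
  (ContinuousLinearMap.proj k : (Fin 2 → ℝ) →L[ℝ] ℝ).differentiableAt

set_option maxHeartbeats 2000000 in
/-- sufficiency in Theorem 3.1. If the horizontal part of the incident
field is curl free, `∇h = (e₁,e₂)`, and `d` is defined by formula (3.14), then the
denominator is bounded below by `κ₁(1-κ₂) > 0`, `d ∈ C¹(Ω)`, and the surface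
`f(x) = P(x) + d(x) m₁(x)` satisfies the orthogonality system. -/
theorem farfield_sufficiency
    (Ω : Set (Fin 2 → ℝ)) (hΩ : IsOpen Ω) (hsc : SimplyConnectedSpace Ω)
    (κ1 κ2 : ℝ) (hκ1 : 1 < κ1) (hκ2 : 0 < κ2) (hκ2' : κ2 < 1)
    (u : (Fin 2 → ℝ) → ℝ) (hu : ContDiff ℝ 2 u)
    (φ : (Fin 2 → ℝ) → (Fin 2 → ℝ)) (hφ : ContDiffOn ℝ 1 φ Ω)
    (P : (Fin 2 → ℝ) → (Fin 3 → ℝ)) (hP : ∀ x, P x = ![φ x 0, φ x 1, u (φ x)])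
    (e : (Fin 2 → ℝ) → (Fin 3 → ℝ)) (he : ContDiffOn ℝ 1 e Ω)
    (heunit : ∀ x ∈ Ω, norm3 (e x) = 1) (he3 : ∀ x ∈ Ω, 0 < e x 2)
    (ρ : (Fin 2 → ℝ) → ℝ) (hρpos : ∀ x ∈ Ω, 0 < ρ x) (hρdiff : DifferentiableOn ℝ ρ Ω)
    (hray : ∀ x ∈ Ω, P x = lift2 x + ρ x • e x)
    (ν1 : (Fin 2 → ℝ) → (Fin 3 → ℝ))
    (hν1 : ∀ x, ν1 x = (Real.sqrt (1 + norm2 (grad2 u (φ x)) ^ 2))⁻¹ •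
        ![-(grad2 u (φ x) 0), -(grad2 u (φ x) 1), 1])
    (hortho : ∀ x ∈ Ω, 0 ≤ dot3 (e x) (ν1 x))
    (lam1 : (Fin 2 → ℝ) → ℝ)
    (hlam1 : ∀ x, lam1 x = dot3 (e x) (ν1 x) -
        κ1 * Real.sqrt (1 - (κ1 ^ 2)⁻¹ * (1 - dot3 (e x) (ν1 x) ^ 2)))
    (m1 : (Fin 2 → ℝ) → (Fin 3 → ℝ)) (hm1 : ∀ x, m1 x = κ1⁻¹ • (e x - lam1 x • ν1 x))
    (w : Fin 3 → ℝ) (hw : norm3 w = 1)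
    (hcurl : ∀ x ∈ Ω, pd 0 (fun y => e y 1) x = pd 1 (fun y => e y 0) x)
    (h : (Fin 2 → ℝ) → ℝ) (hhdiff : ∀ x ∈ Ω, DifferentiableAt ℝ h x)
    (hhgrad : ∀ x ∈ Ω, pd 0 h x = e x 0 ∧ pd 1 h x = e x 1)
    (C : ℝ)
    (d : (Fin 2 → ℝ) → ℝ)
    (hd : ∀ x, d x = (C - h x + dot3 (e x) (lift2 x) - dot3 (e x - (κ1 * κ2) • w) (P x)) /
        (κ1 - κ2 * dot3 w (e x - lam1 x • ν1 x)))
    (f : (Fin 2 → ℝ) → (Fin 3 → ℝ)) (hf : ∀ x, f x = P x + d x • m1 x) :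
    (0 < κ1 * (1 - κ2) ∧
        ∀ x ∈ Ω, κ1 * (1 - κ2) ≤ κ1 - κ2 * dot3 w (e x - lam1 x • ν1 x)) ∧
      ContDiffOn ℝ 1 d Ω ∧
      ∀ x ∈ Ω, ∀ i : Fin 2,
        dot3 (e x - lam1 x • ν1 x - (κ1 * κ2) • w) (fderiv ℝ f x (Pi.single i 1)) = 0 := by
  have hκ1pos : (0:ℝ) < κ1 := lt_trans one_pos hκ1
  have hκ1ne : κ1 ≠ 0 := ne_of_gt hκ1pos
  have hinv : κ1 * κ1⁻¹ = 1 := mul_inv_cancel₀ hκ1ne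
  have hee : ∀ y ∈ Ω, e y 0 * e y 0 + e y 1 * e y 1 + e y 2 * e y 2 = 1 := by
    intro y hy
    have := dot3_self_of_norm3 _ (heunit y hy); simpa [dot3] using this
  -- smoothness of the building blocks
  have cφc : ∀ j : Fin 2, ContDiffOn ℝ 1 (fun y => φ y j) Ω := fun j =>
    (ContinuousLinearMap.proj j : ((Fin 2) → ℝ) →L[ℝ] ℝ).contDiff.comp_contDiffOn hφ
  have cec : ∀ j : Fin 3, ContDiffOn ℝ 1 (fun y => e y j) Ω := fun j =>
    (ContinuousLinearMap.proj j : ((Fin 3) → ℝ) →L[ℝ] ℝ).contDiff.comp_contDiffOn he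
  have cpdu : ∀ k : Fin 2, ContDiff ℝ 1 (fun z => pd k u z) := by
    intro k
    have h1 : ContDiff ℝ 1 (fderiv ℝ u) := hu.fderiv_right (by norm_num)
    show ContDiff ℝ 1 fun z => fderiv ℝ u z (Pi.single k 1)
    exact h1.clm_apply (contDiff_const (c := (Pi.single k 1 : Fin 2 → ℝ)))
  have cA : ∀ k : Fin 2, ContDiffOn ℝ 1 (fun y => pd k u (φ y)) Ω := fun k =>
    (cpdu k).comp_contDiffOn hφ
  have hNpos : ∀ y, 0 < 1 + pd 0 u (φ y)^2 + pd 1 u (φ y)^2 := fun y => by positivity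
  have cNin : ContDiffOn ℝ 1 (fun y => 1 + pd 0 u (φ y)^2 + pd 1 u (φ y)^2) Ω :=
    (contDiffOn_const.add ((cA 0).pow 2)).add ((cA 1).pow 2)
  have cN : ContDiffOn ℝ 1 (fun y => Real.sqrt (1 + pd 0 u (φ y)^2 + pd 1 u (φ y)^2)) Ω := by
    intro y hy
    exact (Real.contDiffAt_sqrt (ne_of_gt (hNpos y))).comp_contDiffWithinAt y (cNin y hy)
  have hNsqrtpos : ∀ y, 0 < Real.sqrt (1 + pd 0 u (φ y)^2 + pd 1 u (φ y)^2) := fun y =>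
    Real.sqrt_pos.2 (hNpos y)
  have hν1' : ∀ y (j : Fin 3), ν1 y j =
      (Real.sqrt (1 + pd 0 u (φ y)^2 + pd 1 u (φ y)^2))⁻¹ *
        (![-(pd 0 u (φ y)), -(pd 1 u (φ y)), 1] j) := by
    intro y j
    have hg0 : grad2 u (φ y) 0 = pd 0 u (φ y) := rfl
    have hg1 : grad2 u (φ y) 1 = pd 1 u (φ y) := rfl
    have hnn : (1:ℝ) + norm2 (grad2 u (φ y)) ^ 2 = 1 + pd 0 u (φ y)^2 + pd 1 u (φ y)^2 := by
      have h0 : 0 ≤ dot2 (grad2 u (φ y)) (grad2 u (φ y)) := by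
        simp only [dot2]; nlinarith [sq_nonneg (grad2 u (φ y) 0), sq_nonneg (grad2 u (φ y) 1)]
      rw [norm2, Real.sq_sqrt h0]
      simp only [dot2, hg0, hg1]; ring
    rw [hν1, Pi.smul_apply, smul_eq_mul, hnn, hg0, hg1]
  have cν : ∀ j : Fin 3, ContDiffOn ℝ 1 (fun y => ν1 y j) Ω := by
    have cNi : ContDiffOn ℝ 1
        (fun y => (Real.sqrt (1 + pd 0 u (φ y)^2 + pd 1 u (φ y)^2))⁻¹) Ω :=
      cN.inv (fun y _ => ne_of_gt (hNsqrtpos y))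
    have c0 : ContDiffOn ℝ 1 (fun y => ν1 y 0) Ω :=
      (cNi.mul (cA 0).neg).congr (fun y _ => hν1' y 0)
    have c1 : ContDiffOn ℝ 1 (fun y => ν1 y 1) Ω :=
      (cNi.mul (cA 1).neg).congr (fun y _ => hν1' y 1)
    have c2 : ContDiffOn ℝ 1 (fun y => ν1 y 2) Ω :=
      (cNi.mul contDiffOn_const).congr (fun y _ => by rw [hν1' y 2]; rfl)
    intro j
    fin_cases j
    · exact c0
    · exact c1
    · exact c2
  have hνν : ∀ y, ν1 y 0 * ν1 y 0 + ν1 y 1 * ν1 y 1 + ν1 y 2 * ν1 y 2 = 1 := by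
    intro y
    have hN2 : Real.sqrt (1 + pd 0 u (φ y)^2 + pd 1 u (φ y)^2) ^ 2
        = 1 + pd 0 u (φ y)^2 + pd 1 u (φ y)^2 := Real.sq_sqrt (hNpos y).le
    have hne := ne_of_gt (hNsqrtpos y)
    rw [hν1' y 0, hν1' y 1, hν1' y 2]
    simp only [Matrix.cons_val_zero, Matrix.cons_val_one, Matrix.head_cons]
    field_simp
    have h2v : (![-(pd 0 u (φ y)), -(pd 1 u (φ y)), 1] : Fin 3 → ℝ) 2 = 1 := rfl
    rw [h2v]; nlinarith [hN2]
  have ct : ContDiffOn ℝ 1 (fun y => dot3 (e y) (ν1 y)) Ω := by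
    have hfn : (fun y => dot3 (e y) (ν1 y)) =
        fun y => e y 0 * ν1 y 0 + e y 1 * ν1 y 1 + e y 2 * ν1 y 2 := rfl
    rw [hfn]
    exact (((cec 0).mul (cν 0)).add ((cec 1).mul (cν 1))).add ((cec 2).mul (cν 2))
  have hargpos : ∀ t : ℝ, 0 < 1 - (κ1^2)⁻¹ * (1 - t^2) := by
    intro t
    have h2 : (1:ℝ) < κ1^2 := by nlinarith
    have h3 : (κ1^2)⁻¹ < 1 := by rw [inv_lt_one_iff₀]; right; exact h2
    have h4 : 0 < (κ1^2)⁻¹ := by positivity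
    nlinarith [sq_nonneg t]
  have clam : ContDiffOn ℝ 1 lam1 Ω := by
    have hfun : lam1 = fun y => dot3 (e y) (ν1 y) -
        κ1 * Real.sqrt (1 - (κ1 ^ 2)⁻¹ * (1 - dot3 (e y) (ν1 y) ^ 2)) := funext hlam1
    rw [hfun]
    refine ct.sub (contDiffOn_const.mul ?_)
    have cin : ContDiffOn ℝ 1 (fun y => 1 - (κ1 ^ 2)⁻¹ * (1 - dot3 (e y) (ν1 y) ^ 2)) Ω :=
      contDiffOn_const.sub (contDiffOn_const.mul (contDiffOn_const.sub (ct.pow 2)))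
    intro y hy
    exact (Real.contDiffAt_sqrt (ne_of_gt (hargpos (dot3 (e y) (ν1 y))))).comp_contDiffWithinAt
      y (cin y hy)
  have cV : ∀ j : Fin 3, ContDiffOn ℝ 1 (fun y => e y j - lam1 y * ν1 y j) Ω := fun j =>
    (cec j).sub (clam.mul (cν j))
  -- |e - λ₁ ν₁|² = κ₁²
  have hVV : ∀ y ∈ Ω,
      (e y 0 - lam1 y * ν1 y 0)*(e y 0 - lam1 y * ν1 y 0)
      + (e y 1 - lam1 y * ν1 y 1)*(e y 1 - lam1 y * ν1 y 1)
      + (e y 2 - lam1 y * ν1 y 2)*(e y 2 - lam1 y * ν1 y 2) = κ1^2 := by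
    intro y hy
    have h1 := hee y hy
    have h2 := hνν y
    have harg := hargpos (dot3 (e y) (ν1 y))
    have hs2 : Real.sqrt (1 - (κ1^2)⁻¹ * (1 - dot3 (e y) (ν1 y)^2))^2
        = 1 - (κ1^2)⁻¹ * (1 - dot3 (e y) (ν1 y)^2) := Real.sq_sqrt harg.le
    have hinv2 : κ1^2 * (κ1^2)⁻¹ = 1 := mul_inv_cancel₀ (by positivity)
    rw [hlam1 y]
    simp only [dot3] at hs2 ⊢
    set t := e y 0 * ν1 y 0 + e y 1 * ν1 y 1 + e y 2 * ν1 y 2 with hts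
    set s := Real.sqrt (1 - (κ1^2)⁻¹ * (1 - t^2)) with hss
    linear_combination h1 + (t - κ1*s)^2 * h2 + κ1^2 * hs2 - (1 - t^2) * hinv2
  have hww : dot3 w w = 1 := dot3_self_of_norm3 w hw
  -- Part 1
  have hden_ge : ∀ y ∈ Ω, κ1 * (1 - κ2) ≤ κ1 - κ2 * dot3 w (e y - lam1 y • ν1 y) := by
    intro y hy
    have hV := hVV y hy
    have hcs := dot3_sq_le w (e y - lam1 y • ν1 y)
    have hVV' : dot3 (e y - lam1 y • ν1 y) (e y - lam1 y • ν1 y) = κ1^2 := by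
      show (e y 0 - lam1 y * ν1 y 0)*(e y 0 - lam1 y * ν1 y 0)
        + (e y 1 - lam1 y * ν1 y 1)*(e y 1 - lam1 y * ν1 y 1)
        + (e y 2 - lam1 y * ν1 y 2)*(e y 2 - lam1 y * ν1 y 2) = κ1^2
      exact hV
    rw [hww, one_mul, hVV'] at hcs
    nlinarith [hcs, sq_nonneg (dot3 w (e y - lam1 y • ν1 y) - κ1),
      sq_nonneg (dot3 w (e y - lam1 y • ν1 y) + κ1)]
  have hdenpos : ∀ y ∈ Ω, 0 < κ1 - κ2 * dot3 w (e y - lam1 y • ν1 y) := fun y hy =>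
    lt_of_lt_of_le (by nlinarith) (hden_ge y hy)
  -- h is C¹
  have ch : ContDiffOn ℝ 1 h Ω := by
    rw [show (1 : WithTop ℕ∞) = 0 + 1 from rfl, contDiffOn_succ_iff_fderiv_of_isOpen hΩ]
    refine ⟨fun y hy => (hhdiff y hy).differentiableWithinAt, by simp, ?_⟩
    rw [contDiffOn_zero]
    have heq : ∀ y ∈ Ω, fderiv ℝ h y =
        e y 0 • (ContinuousLinearMap.proj (R := ℝ) (φ := fun _ : Fin 2 => ℝ) 0)
        + e y 1 • (ContinuousLinearMap.proj (R := ℝ) (φ := fun _ : Fin 2 => ℝ) 1) := by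
      intro y hy
      ext v
      have hvdec : v = v 0 • (Pi.single 0 1 : Fin 2 → ℝ) + v 1 • (Pi.single 1 1 : Fin 2 → ℝ) := by
        funext k; fin_cases k <;> simp [Pi.single_apply]
      have h0 := (hhgrad y hy).1
      have h1 := (hhgrad y hy).2
      simp only [pd] at h0 h1
      conv_lhs => rw [hvdec]
      rw [map_add, map_smul, map_smul, h0, h1]
      simp [smul_eq_mul]
      ring
    refine ContinuousOn.congr ?_ heq
    exact (((cec 0).continuousOn).smul continuousOn_const).add
      (((cec 1).continuousOn).smul continuousOn_const)
  -- P components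
  have hP0 : ∀ y, P y 0 = φ y 0 := fun y => by rw [hP]; rfl
  have hP1 : ∀ y, P y 1 = φ y 1 := fun y => by rw [hP]; rfl
  have hP2 : ∀ y, P y 2 = u (φ y) := fun y => by rw [hP]; rfl
  have cuφ : ContDiffOn ℝ 1 (fun y => u (φ y)) Ω := (hu.of_le one_le_two).comp_contDiffOn hφ
  have cP : ∀ j : Fin 3, ContDiffOn ℝ 1 (fun y => P y j) Ω := by
    intro j
    fin_cases j
    · exact (cφc 0).congr (fun y _ => hP0 y)
    · exact (cφc 1).congr (fun y _ => hP1 y)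
    · exact cuφ.congr (fun y _ => hP2 y)
  -- Part 2
  have cDen : ContDiffOn ℝ 1 (fun y => κ1 - κ2 * dot3 w (e y - lam1 y • ν1 y)) Ω := by
    have hfn : (fun y => κ1 - κ2 * dot3 w (e y - lam1 y • ν1 y)) =
        fun y => κ1 - κ2 * (w 0 * (e y 0 - lam1 y * ν1 y 0) + w 1 * (e y 1 - lam1 y * ν1 y 1)
          + w 2 * (e y 2 - lam1 y * ν1 y 2)) := rfl
    rw [hfn]
    exact contDiffOn_const.sub (contDiffOn_const.mul
      (((contDiffOn_const.mul (cV 0)).add (contDiffOn_const.mul (cV 1))).add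
        (contDiffOn_const.mul (cV 2))))
  have cNum : ContDiffOn ℝ 1
      (fun y => C - h y + dot3 (e y) (lift2 y) - dot3 (e y - (κ1 * κ2) • w) (P y)) Ω := by
    have hfn : (fun y => C - h y + dot3 (e y) (lift2 y) - dot3 (e y - (κ1 * κ2) • w) (P y)) =
        fun y => C - h y + (e y 0 * y 0 + e y 1 * y 1 + e y 2 * 0)
          - ((e y 0 - κ1 * κ2 * w 0) * P y 0 + (e y 1 - κ1 * κ2 * w 1) * P y 1
             + (e y 2 - κ1 * κ2 * w 2) * P y 2) := rfl
    rw [hfn]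
    have ccoord : ∀ k : Fin 2, ContDiffOn ℝ 1 (fun y : Fin 2 → ℝ => y k) Ω := fun k =>
      (ContinuousLinearMap.proj k : (Fin 2 → ℝ) →L[ℝ] ℝ).contDiff.contDiffOn
    refine ContDiffOn.sub (ContDiffOn.add (contDiffOn_const.sub ch) ?_) ?_
    · exact (((cec 0).mul (ccoord 0)).add ((cec 1).mul (ccoord 1))).add ((cec 2).mul contDiffOn_const)
    · exact ((((cec 0).sub contDiffOn_const).mul (cP 0)).add
        (((cec 1).sub contDiffOn_const).mul (cP 1))).add
        (((cec 2).sub contDiffOn_const).mul (cP 2))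
  have cd : ContDiffOn ℝ 1 d Ω := by
    have hdfun : d = fun y =>
        (C - h y + dot3 (e y) (lift2 y) - dot3 (e y - (κ1 * κ2) • w) (P y)) /
        (κ1 - κ2 * dot3 w (e y - lam1 y • ν1 y)) := funext hd
    rw [hdfun]
    exact cNum.div cDen (fun y hy => ne_of_gt (hdenpos y hy))
  refine ⟨⟨by nlinarith, hden_ge⟩, cd, ?_⟩
  -- Part 3
  intro x hx i
  have hxv : Ω ∈ nhds x := hΩ.mem_nhds hx
  have dAt : ∀ {g : (Fin 2 → ℝ) → ℝ}, ContDiffOn ℝ 1 g Ω → DifferentiableAt ℝ g x :=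
    fun hg => ((hg.differentiableOn one_ne_zero).differentiableAt hxv)
  have dφ : ∀ k : Fin 2, DifferentiableAt ℝ (fun y => φ y k) x := fun k => dAt (cφc k)
  have de : ∀ j : Fin 3, DifferentiableAt ℝ (fun y => e y j) x := fun j => dAt (cec j)
  have dν : ∀ j : Fin 3, DifferentiableAt ℝ (fun y => ν1 y j) x := fun j => dAt (cν j)
  have dVd : ∀ j : Fin 3, DifferentiableAt ℝ (fun y => e y j - lam1 y * ν1 y j) x := fun j =>
    dAt (cV j)
  have dPd : ∀ j : Fin 3, DifferentiableAt ℝ (fun y => P y j) x := fun j => dAt (cP j)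
  have ddd : DifferentiableAt ℝ d x := dAt cd
  have dhh : DifferentiableAt ℝ h x := hhdiff x hx
  have duφ : DifferentiableAt ℝ (fun y => u (φ y)) x := dAt cuφ
  -- components of f
  have hfj : ∀ j : Fin 3, (fun y => f y j)
      = fun y => P y j + d y * (κ1⁻¹ * (e y j - lam1 y * ν1 y j)) := by
    intro j; funext y
    rw [hf y, Pi.add_apply, Pi.smul_apply, hm1 y, Pi.smul_apply, Pi.sub_apply, Pi.smul_apply,
      smul_eq_mul, smul_eq_mul, smul_eq_mul]
  have dfj : ∀ j : Fin 3, DifferentiableAt ℝ (fun y => f y j) x := by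
    intro j; rw [hfj j]
    exact (dPd j).add (ddd.mul ((differentiableAt_const _).mul (dVd j)))
  have hfpi : ∀ j : Fin 3, fderiv ℝ f x (Pi.single i 1) j
      = fderiv ℝ (fun y => f y j) x (Pi.single i 1) := by
    intro j
    rw [show fderiv ℝ f x = ContinuousLinearMap.pi (fun j => fderiv ℝ (fun y => f y j) x) from
      fderiv_pi dfj]
    rfl
  have Ef : ∀ j : Fin 3, fderiv ℝ (fun y => f y j) x (Pi.single i 1)
      = fderiv ℝ (fun y => P y j) x (Pi.single i 1)
        + (d x * (κ1⁻¹ * fderiv ℝ (fun y => e y j - lam1 y * ν1 y j) x (Pi.single i 1))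
           + κ1⁻¹ * (e x j - lam1 x * ν1 x j) * fderiv ℝ d x (Pi.single i 1)) := by
    intro j
    rw [hfj j, Dadd (dPd j) (ddd.fun_mul ((differentiableAt_const _).fun_mul (dVd j))),
        Dmul ddd ((differentiableAt_const _).fun_mul (dVd j)),
        Dmul (differentiableAt_const κ1⁻¹) (dVd j)]
    simp
    all_goals ring
  -- P-component derivatives
  have EP0 : fderiv ℝ (fun y => P y 0) x (Pi.single i 1)
      = fderiv ℝ (fun y => φ y 0) x (Pi.single i 1) := by
    rw [show (fun y => P y 0) = fun y => φ y 0 from funext hP0]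
  have EP1 : fderiv ℝ (fun y => P y 1) x (Pi.single i 1)
      = fderiv ℝ (fun y => φ y 1) x (Pi.single i 1) := by
    rw [show (fun y => P y 1) = fun y => φ y 1 from funext hP1]
  have EP2 : fderiv ℝ (fun y => P y 2) x (Pi.single i 1)
      = pd 0 u (φ x) * fderiv ℝ (fun y => φ y 0) x (Pi.single i 1)
        + pd 1 u (φ x) * fderiv ℝ (fun y => φ y 1) x (Pi.single i 1) := by
    rw [show (fun y => P y 2) = fun y => u (φ y) from funext hP2]
    have hφd : DifferentiableAt ℝ φ x := (hφ.differentiableOn one_ne_zero).differentiableAt hxv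
    have hud : DifferentiableAt ℝ u (φ x) := (hu.differentiable two_ne_zero).differentiableAt
    have hcomp : fderiv ℝ (fun y => u (φ y)) x = (fderiv ℝ u (φ x)).comp (fderiv ℝ φ x) :=
      fderiv_comp x hud hφd
    rw [hcomp, ContinuousLinearMap.comp_apply]
    set z := fderiv ℝ φ x (Pi.single i 1) with hz
    have hzj : ∀ k : Fin 2, z k = fderiv ℝ (fun y => φ y k) x (Pi.single i 1) := by
      intro k
      rw [hz, show fderiv ℝ φ x = ContinuousLinearMap.pi
        (fun k => fderiv ℝ (fun y => φ y k) x) from fderiv_pi dφ]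
      rfl
    have hzdec : z = z 0 • (Pi.single 0 1 : Fin 2 → ℝ) + z 1 • (Pi.single 1 1 : Fin 2 → ℝ) := by
      funext k; fin_cases k <;> simp [Pi.single_apply]
    rw [hzdec, map_add, map_smul, map_smul, smul_eq_mul, smul_eq_mul, hzj 0, hzj 1]
    simp only [pd]
    ring
  -- H3 : e · ∂e = 0
  have H3 : e x 0 * fderiv ℝ (fun y => e y 0) x (Pi.single i 1)
      + e x 1 * fderiv ℝ (fun y => e y 1) x (Pi.single i 1)
      + e x 2 * fderiv ℝ (fun y => e y 2) x (Pi.single i 1) = 0 := by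
    have hconst : (fun y => e y 0 * e y 0 + e y 1 * e y 1 + e y 2 * e y 2) =ᶠ[nhds x]
        fun _ => (1:ℝ) := Filter.eventuallyEq_of_mem hxv hee
    have h0 : fderiv ℝ (fun y => e y 0 * e y 0 + e y 1 * e y 1 + e y 2 * e y 2) x
        (Pi.single i 1) = 0 := by
      rw [hconst.fderiv_eq]; simp
    have hcalc : fderiv ℝ (fun y => e y 0 * e y 0 + e y 1 * e y 1 + e y 2 * e y 2) x
        (Pi.single i 1)
        = 2 * (e x 0 * fderiv ℝ (fun y => e y 0) x (Pi.single i 1)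
          + e x 1 * fderiv ℝ (fun y => e y 1) x (Pi.single i 1)
          + e x 2 * fderiv ℝ (fun y => e y 2) x (Pi.single i 1)) := by
      rw [Dadd (((de 0).fun_mul (de 0)).fun_add ((de 1).fun_mul (de 1))) ((de 2).fun_mul (de 2)),
          Dadd ((de 0).fun_mul (de 0)) ((de 1).fun_mul (de 1)),
          Dmul (de 0) (de 0), Dmul (de 1) (de 1), Dmul (de 2) (de 2)]
      ring
    rw [hcalc] at h0; linarith
  -- H2 : V · ∂V = 0
  have H2 : (e x 0 - lam1 x * ν1 x 0) * fderiv ℝ (fun y => e y 0 - lam1 y * ν1 y 0) x (Pi.single i 1)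
      + (e x 1 - lam1 x * ν1 x 1) * fderiv ℝ (fun y => e y 1 - lam1 y * ν1 y 1) x (Pi.single i 1)
      + (e x 2 - lam1 x * ν1 x 2) * fderiv ℝ (fun y => e y 2 - lam1 y * ν1 y 2) x (Pi.single i 1)
      = 0 := by
    have hconst : (fun y => (e y 0 - lam1 y * ν1 y 0) * (e y 0 - lam1 y * ν1 y 0)
        + (e y 1 - lam1 y * ν1 y 1) * (e y 1 - lam1 y * ν1 y 1)
        + (e y 2 - lam1 y * ν1 y 2) * (e y 2 - lam1 y * ν1 y 2)) =ᶠ[nhds x]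
        fun _ => κ1^2 := Filter.eventuallyEq_of_mem hxv hVV
    have h0 : fderiv ℝ (fun y => (e y 0 - lam1 y * ν1 y 0) * (e y 0 - lam1 y * ν1 y 0)
        + (e y 1 - lam1 y * ν1 y 1) * (e y 1 - lam1 y * ν1 y 1)
        + (e y 2 - lam1 y * ν1 y 2) * (e y 2 - lam1 y * ν1 y 2)) x (Pi.single i 1) = 0 := by
      rw [hconst.fderiv_eq]; simp
    have hcalc : fderiv ℝ (fun y => (e y 0 - lam1 y * ν1 y 0) * (e y 0 - lam1 y * ν1 y 0)
        + (e y 1 - lam1 y * ν1 y 1) * (e y 1 - lam1 y * ν1 y 1)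
        + (e y 2 - lam1 y * ν1 y 2) * (e y 2 - lam1 y * ν1 y 2)) x (Pi.single i 1)
        = 2 * ((e x 0 - lam1 x * ν1 x 0) * fderiv ℝ (fun y => e y 0 - lam1 y * ν1 y 0) x (Pi.single i 1)
          + (e x 1 - lam1 x * ν1 x 1) * fderiv ℝ (fun y => e y 1 - lam1 y * ν1 y 1) x (Pi.single i 1)
          + (e x 2 - lam1 x * ν1 x 2) * fderiv ℝ (fun y => e y 2 - lam1 y * ν1 y 2) x (Pi.single i 1)) := by
      rw [Dadd (((dVd 0).fun_mul (dVd 0)).fun_add ((dVd 1).fun_mul (dVd 1))) ((dVd 2).fun_mul (dVd 2)),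
          Dadd ((dVd 0).fun_mul (dVd 0)) ((dVd 1).fun_mul (dVd 1)),
          Dmul (dVd 0) (dVd 0), Dmul (dVd 1) (dVd 1), Dmul (dVd 2) (dVd 2)]
      ring
    rw [hcalc] at h0; linarith
  -- H4 : ν1 · ∂P = 0
  have H4 : ν1 x 0 * fderiv ℝ (fun y => φ y 0) x (Pi.single i 1)
      + ν1 x 1 * fderiv ℝ (fun y => φ y 1) x (Pi.single i 1)
      + ν1 x 2 * (pd 0 u (φ x) * fderiv ℝ (fun y => φ y 0) x (Pi.single i 1)
        + pd 1 u (φ x) * fderiv ℝ (fun y => φ y 1) x (Pi.single i 1)) = 0 := by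
    have e0 : ν1 x 0 = (Real.sqrt (1 + pd 0 u (φ x)^2 + pd 1 u (φ x)^2))⁻¹ * -(pd 0 u (φ x)) :=
      hν1' x 0
    have e1 : ν1 x 1 = (Real.sqrt (1 + pd 0 u (φ x)^2 + pd 1 u (φ x)^2))⁻¹ * -(pd 1 u (φ x)) :=
      hν1' x 1
    have e2 : ν1 x 2 = (Real.sqrt (1 + pd 0 u (φ x)^2 + pd 1 u (φ x)^2))⁻¹ * 1 := hν1' x 2
    rw [e0, e1, e2]
    ring
  -- H5 : the derivative of the defining relation d·Den = Num
  have hWR : (fun y => d y * (κ1 - κ2 * (w 0 * (e y 0 - lam1 y * ν1 y 0)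
        + w 1 * (e y 1 - lam1 y * ν1 y 1) + w 2 * (e y 2 - lam1 y * ν1 y 2))))
      =ᶠ[nhds x] (fun y => C - h y + (e y 0 * y 0 + e y 1 * y 1 + e y 2 * 0)
        - ((e y 0 - κ1 * κ2 * w 0) * P y 0 + (e y 1 - κ1 * κ2 * w 1) * P y 1
           + (e y 2 - κ1 * κ2 * w 2) * P y 2)) := by
    refine Filter.eventuallyEq_of_mem hxv (fun y hy => ?_)
    have hdenne : (κ1 - κ2 * dot3 w (e y - lam1 y • ν1 y)) ≠ 0 := ne_of_gt (hdenpos y hy)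
    have hden_eq : dot3 w (e y - lam1 y • ν1 y) = w 0 * (e y 0 - lam1 y * ν1 y 0)
        + w 1 * (e y 1 - lam1 y * ν1 y 1) + w 2 * (e y 2 - lam1 y * ν1 y 2) := rfl
    have hnum_eq : dot3 (e y - (κ1 * κ2) • w) (P y) = (e y 0 - κ1 * κ2 * w 0) * P y 0
        + (e y 1 - κ1 * κ2 * w 1) * P y 1 + (e y 2 - κ1 * κ2 * w 2) * P y 2 := rfl
    have hlift_eq : dot3 (e y) (lift2 y) = e y 0 * y 0 + e y 1 * y 1 + e y 2 * 0 := rfl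
    show d y * _ = _
    rw [← hden_eq, ← hnum_eq, ← hlift_eq, hd y]
    exact div_mul_cancel₀ _ hdenne
  have dS : DifferentiableAt ℝ (fun y => w 0 * (e y 0 - lam1 y * ν1 y 0)
      + w 1 * (e y 1 - lam1 y * ν1 y 1) + w 2 * (e y 2 - lam1 y * ν1 y 2)) x :=
    (((differentiableAt_const (w 0)).mul (dVd 0)).add
      ((differentiableAt_const (w 1)).mul (dVd 1))).add
      ((differentiableAt_const (w 2)).mul (dVd 2))
  have dDen : DifferentiableAt ℝ (fun y => κ1 - κ2 * (w 0 * (e y 0 - lam1 y * ν1 y 0)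
      + w 1 * (e y 1 - lam1 y * ν1 y 1) + w 2 * (e y 2 - lam1 y * ν1 y 2))) x :=
    (differentiableAt_const κ1).sub ((differentiableAt_const κ2).mul dS)
  have EW : fderiv ℝ (fun y => d y * (κ1 - κ2 * (w 0 * (e y 0 - lam1 y * ν1 y 0)
        + w 1 * (e y 1 - lam1 y * ν1 y 1) + w 2 * (e y 2 - lam1 y * ν1 y 2)))) x (Pi.single i 1)
      = d x * (-(κ2 * (w 0 * fderiv ℝ (fun y => e y 0 - lam1 y * ν1 y 0) x (Pi.single i 1)
          + w 1 * fderiv ℝ (fun y => e y 1 - lam1 y * ν1 y 1) x (Pi.single i 1)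
          + w 2 * fderiv ℝ (fun y => e y 2 - lam1 y * ν1 y 2) x (Pi.single i 1))))
        + (κ1 - κ2 * (w 0 * (e x 0 - lam1 x * ν1 x 0) + w 1 * (e x 1 - lam1 x * ν1 x 1)
            + w 2 * (e x 2 - lam1 x * ν1 x 2))) * fderiv ℝ d x (Pi.single i 1) := by
    rw [Dmul ddd dDen,
        Dsub (differentiableAt_const κ1) ((differentiableAt_const κ2).fun_mul dS),
        Dmul (differentiableAt_const κ2) dS,
        Dadd (((differentiableAt_const (w 0)).fun_mul (dVd 0)).fun_add
          ((differentiableAt_const (w 1)).fun_mul (dVd 1))) ((differentiableAt_const (w 2)).fun_mul (dVd 2)),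
        Dadd ((differentiableAt_const (w 0)).fun_mul (dVd 0)) ((differentiableAt_const (w 1)).fun_mul (dVd 1)),
        Dmul (differentiableAt_const (w 0)) (dVd 0),
        Dmul (differentiableAt_const (w 1)) (dVd 1),
        Dmul (differentiableAt_const (w 2)) (dVd 2)]
    simp
    all_goals ring
  have dlift : DifferentiableAt ℝ (fun y : Fin 2 → ℝ => e y 0 * y 0 + e y 1 * y 1 + e y 2 * 0) x :=
    (((de 0).mul (dcoord 0 x)).add ((de 1).mul (dcoord 1 x))).add
      ((de 2).mul (differentiableAt_const 0))
  have dbig : DifferentiableAt ℝ (fun y => (e y 0 - κ1 * κ2 * w 0) * P y 0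
      + (e y 1 - κ1 * κ2 * w 1) * P y 1 + (e y 2 - κ1 * κ2 * w 2) * P y 2) x :=
    ((((de 0).sub (differentiableAt_const (κ1 * κ2 * w 0))).mul (dPd 0)).add
      (((de 1).sub (differentiableAt_const (κ1 * κ2 * w 1))).mul (dPd 1))).add
      (((de 2).sub (differentiableAt_const (κ1 * κ2 * w 2))).mul (dPd 2))
  have ER : fderiv ℝ (fun y => C - h y + (e y 0 * y 0 + e y 1 * y 1 + e y 2 * 0)
        - ((e y 0 - κ1 * κ2 * w 0) * P y 0 + (e y 1 - κ1 * κ2 * w 1) * P y 1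
           + (e y 2 - κ1 * κ2 * w 2) * P y 2)) x (Pi.single i 1)
      = -(fderiv ℝ h x (Pi.single i 1))
        + (fderiv ℝ (fun y => e y 0) x (Pi.single i 1) * x 0 + e x 0 * (Pi.single i 1 : Fin 2 → ℝ) 0
          + fderiv ℝ (fun y => e y 1) x (Pi.single i 1) * x 1 + e x 1 * (Pi.single i 1 : Fin 2 → ℝ) 1
          + fderiv ℝ (fun y => e y 2) x (Pi.single i 1) * 0)
        - ((fderiv ℝ (fun y => e y 0) x (Pi.single i 1) * P x 0
            + (e x 0 - κ1 * κ2 * w 0) * fderiv ℝ (fun y => P y 0) x (Pi.single i 1))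
          + (fderiv ℝ (fun y => e y 1) x (Pi.single i 1) * P x 1
            + (e x 1 - κ1 * κ2 * w 1) * fderiv ℝ (fun y => P y 1) x (Pi.single i 1))
          + (fderiv ℝ (fun y => e y 2) x (Pi.single i 1) * P x 2
            + (e x 2 - κ1 * κ2 * w 2) * fderiv ℝ (fun y => P y 2) x (Pi.single i 1))) := by
    rw [Dsub (((differentiableAt_const C).fun_sub dhh).fun_add dlift) dbig,
        Dadd ((differentiableAt_const C).fun_sub dhh) dlift,
        Dsub (differentiableAt_const C) dhh,
        Dadd (((de 0).fun_mul (dcoord 0 x)).fun_add ((de 1).fun_mul (dcoord 1 x)))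
          ((de 2).fun_mul (differentiableAt_const 0)),
        Dadd ((de 0).fun_mul (dcoord 0 x)) ((de 1).fun_mul (dcoord 1 x)),
        Dmul (de 0) (dcoord 0 x), Dmul (de 1) (dcoord 1 x),
        Dmul (de 2) (differentiableAt_const 0),
        Dadd ((((de 0).fun_sub (differentiableAt_const (κ1 * κ2 * w 0))).fun_mul (dPd 0)).fun_add
          (((de 1).fun_sub (differentiableAt_const (κ1 * κ2 * w 1))).fun_mul (dPd 1)))
          (((de 2).fun_sub (differentiableAt_const (κ1 * κ2 * w 2))).fun_mul (dPd 2)),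
        Dadd (((de 0).fun_sub (differentiableAt_const (κ1 * κ2 * w 0))).fun_mul (dPd 0))
          (((de 1).fun_sub (differentiableAt_const (κ1 * κ2 * w 1))).fun_mul (dPd 1)),
        Dmul ((de 0).fun_sub (differentiableAt_const (κ1 * κ2 * w 0))) (dPd 0),
        Dmul ((de 1).fun_sub (differentiableAt_const (κ1 * κ2 * w 1))) (dPd 1),
        Dmul ((de 2).fun_sub (differentiableAt_const (κ1 * κ2 * w 2))) (dPd 2),
        Dsub (de 0) (differentiableAt_const (κ1 * κ2 * w 0)),
        Dsub (de 1) (differentiableAt_const (κ1 * κ2 * w 1)),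
        Dsub (de 2) (differentiableAt_const (κ1 * κ2 * w 2)),
        Dcoord 0 x (Pi.single i 1), Dcoord 1 x (Pi.single i 1)]
    simp
    all_goals ring
  have H5 := (EW.symm.trans (congrFun (congrArg DFunLike.coe (hWR.fderiv_eq)) (Pi.single i 1))).trans ER
  -- values of the single vector and of ∂h
  have hDh : fderiv ℝ h x (Pi.single i 1) = e x (Fin.castSucc i) := by
    fin_cases i
    · exact (hhgrad x hx).1
    · exact (hhgrad x hx).2
  have hsing : e x 0 * (Pi.single i 1 : Fin 2 → ℝ) 0 + e x 1 * (Pi.single i 1 : Fin 2 → ℝ) 1 = e x (Fin.castSucc i) := by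
    fin_cases i <;> simp [Pi.single_apply]
  -- ray values
  have hr0 : P x 0 = x 0 + ρ x * e x 0 := by rw [hray x hx]; rfl
  have hr1 : P x 1 = x 1 + ρ x * e x 1 := by rw [hray x hx]; rfl
  have hr2 : P x 2 = 0 + ρ x * e x 2 := by rw [hray x hx]; rfl
  -- final assembly
  have H1 := hVV x hx
  have hgoal : dot3 (e x - lam1 x • ν1 x - (κ1 * κ2) • w) (fderiv ℝ f x (Pi.single i 1))
      = (e x 0 - lam1 x * ν1 x 0 - κ1 * κ2 * w 0) * fderiv ℝ f x (Pi.single i 1) 0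
        + (e x 1 - lam1 x * ν1 x 1 - κ1 * κ2 * w 1) * fderiv ℝ f x (Pi.single i 1) 1
        + (e x 2 - lam1 x * ν1 x 2 - κ1 * κ2 * w 2) * fderiv ℝ f x (Pi.single i 1) 2 := rfl
  rw [hgoal, hfpi 0, hfpi 1, hfpi 2, Ef 0, Ef 1, Ef 2, EP0, EP1, EP2]
  rw [EP0, EP1, EP2, hDh] at H5
  linear_combination (d x * κ1⁻¹) * H2 + (fderiv ℝ d x (Pi.single i 1) * κ1⁻¹) * H1
    + (κ1 * fderiv ℝ d x (Pi.single i 1)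
        - κ2 * fderiv ℝ d x (Pi.single i 1) * (w 0 * (e x 0 - lam1 x * ν1 x 0)
          + w 1 * (e x 1 - lam1 x * ν1 x 1) + w 2 * (e x 2 - lam1 x * ν1 x 2))
        - κ2 * d x * (w 0 * fderiv ℝ (fun y => e y 0 - lam1 y * ν1 y 0) x (Pi.single i 1)
          + w 1 * fderiv ℝ (fun y => e y 1 - lam1 y * ν1 y 1) x (Pi.single i 1)
          + w 2 * fderiv ℝ (fun y => e y 2 - lam1 y * ν1 y 2) x (Pi.single i 1))) * hinv
    + H5 + hsing - lam1 x * H4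
    - fderiv ℝ (fun y => e y 0) x (Pi.single i 1) * hr0
    - fderiv ℝ (fun y => e y 1) x (Pi.single i 1) * hr1
    - fderiv ℝ (fun y => e y 2) x (Pi.single i 1) * hr2
    - ρ x * H3
end

section
/- Let $\Omega\subseteq\mathbb{R}^2$ be open, $h:\Omega\to\mathbb{R}$ be $C^2$, and suppose $e(x)=(\nabla h(x), e_3(x))$ is a $C^1$ field on $\Omega$ with $|e(x)|=1$. Let $\tilde C$ be a constant, set $\lambda(x) = \tilde C - h(x)$, and define $g(x) = (x,0) + \lambda(x)\,e(x)$. Then for all $x\in\Omega$ and $i=1,2$, $\dfrac{\partial g}{\partial x_i}(x)\cdot e(x) = 0$; that is, the surface parametrized by $g$ is orthogonal to the field $e$. -/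
/-!
Pair `∂ᵢg = ∂ᵢ(x,0) - ∂ᵢh e + λ ∂ᵢe` with `e`: the first term gives `eᵢ = ∂ᵢh`, the second
`-∂ᵢh |e|² = -∂ᵢh`, and the third vanishes because `e · ∂ᵢe = ½ ∂ᵢ|e|² = 0`. The argument works
for every direction `v`, not only the coordinate ones.
-/

open Filter Topology

lemma dot3_eq_dotProduct (a b : Fin 3 → ℝ) : dot3 a b = a ⬝ᵥ b := by
  simp [dot3, dotProduct, Fin.sum_univ_three]

lemma dot3_comm (a b : Fin 3 → ℝ) : dot3 a b = dot3 b a := by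
  rw [dot3_eq_dotProduct, dot3_eq_dotProduct, dotProduct_comm]

lemma dot3_lift2_left (v : Fin 2 → ℝ) (w : Fin 3 → ℝ) :
    dot3 (lift2 v) w = v 0 * w 0 + v 1 * w 1 := by
  simp [dot3, lift2]

def lift2CLM : (Fin 2 → ℝ) →L[ℝ] (Fin 3 → ℝ) :=
  ContinuousLinearMap.pi ![ContinuousLinearMap.proj 0, ContinuousLinearMap.proj 1, 0]

lemma coe_lift2CLM : ⇑lift2CLM = lift2 := by
  ext v j; fin_cases j <;> rfl

lemma ContinuousLinearMap.apply_eq_sum_apply_single_fin_two (L : (Fin 2 → ℝ) →L[ℝ] ℝ)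
    (v : Fin 2 → ℝ) : L v = v 0 * L (Pi.single 0 1) + v 1 * L (Pi.single 1 1) := by
  have hv : v = v 0 • Pi.single 0 1 + v 1 • Pi.single 1 1 := by
    ext j; fin_cases j <;> simp
  conv_lhs => rw [hv]
  simp only [map_add, map_smul, smul_eq_mul]

lemma fderiv_apply_eq_pd (f : (Fin 2 → ℝ) → ℝ) (x v : Fin 2 → ℝ) :
    fderiv ℝ f x v = v 0 * pd 0 f x + v 1 * pd 1 f x :=
  (fderiv ℝ f x).apply_eq_sum_apply_single_fin_two v

section

variable {E : Type*} [NormedAddCommGroup E] [NormedSpace ℝ E] {u w : E → Fin 3 → ℝ} {x : E}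

lemma fderiv_dot3_apply (hu : DifferentiableAt ℝ u x) (hw : DifferentiableAt ℝ w x) (v : E) :
    fderiv ℝ (fun y => dot3 (u y) (w y)) x v =
      dot3 (fderiv ℝ u x v) (w x) + dot3 (u x) (fderiv ℝ w x v) := by
  have hu' := hasFDerivAt_pi'.1 hu.hasFDerivAt
  have hw' := hasFDerivAt_pi'.1 hw.hasFDerivAt
  have H : HasFDerivAt (fun y => dot3 (u y) (w y)) _ x :=
    (((hu' 0).fun_mul (hw' 0)).fun_add ((hu' 1).fun_mul (hw' 1))).fun_add
      ((hu' 2).fun_mul (hw' 2))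
  rw [H.fderiv]
  simp only [add_apply, smul_apply,
    ContinuousLinearMap.comp_apply, ContinuousLinearMap.proj_apply, smul_eq_mul, dot3]
  ring

lemma dot3_fderiv_apply_self_eq_zero (hu : DifferentiableAt ℝ u x)
    (hunit : ∀ᶠ y in 𝓝 x, dot3 (u y) (u y) = 1) (v : E) :
    dot3 (fderiv ℝ u x v) (u x) = 0 := by
  have h := fderiv_dot3_apply hu hu v
  rw [(show (fun y => dot3 (u y) (u y)) =ᶠ[𝓝 x] fun _ => (1 : ℝ) from hunit).fderiv_eq,
    dot3_comm (u x)] at h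
  simp only [fderiv_fun_const, Pi.zero_apply, zero_apply] at h
  linarith

end

section

variable {h : (Fin 2 → ℝ) → ℝ} {e : (Fin 2 → ℝ) → Fin 3 → ℝ} {x : Fin 2 → ℝ}

lemma fderiv_surface_apply (c : ℝ) (hh : DifferentiableAt ℝ h x) (he : DifferentiableAt ℝ e x)
    (v : Fin 2 → ℝ) :
    fderiv ℝ (fun y => lift2 y + (c - h y) • e y) x v =
      lift2 v + (c - h x) • fderiv ℝ e x v - fderiv ℝ h x v • e x := by
  have hlift : HasFDerivAt lift2 lift2CLM x := coe_lift2CLM ▸ lift2CLM.hasFDerivAt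
  rw [(hlift.fun_add (((hasFDerivAt_const c x).fun_sub hh.hasFDerivAt).fun_smul
    he.hasFDerivAt)).fderiv]
  simp only [zero_sub, add_apply, coe_lift2CLM,
    smul_apply, ContinuousLinearMap.smulRight_apply,
    neg_apply, neg_smul]
  abel

lemma dot3_fderiv_surface_apply_eq_zero (c : ℝ) (hh : DifferentiableAt ℝ h x)
    (he : DifferentiableAt ℝ e x) (hunit : ∀ᶠ y in 𝓝 x, dot3 (e y) (e y) = 1)
    (hgrad : e x 0 = pd 0 h x ∧ e x 1 = pd 1 h x) (v : Fin 2 → ℝ) :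
    dot3 (fderiv ℝ (fun y => lift2 y + (c - h y) • e y) x v) (e x) = 0 := by
  have hde := dot3_fderiv_apply_self_eq_zero he hunit v
  have hee := hunit.self_of_nhds
  rw [dot3_eq_dotProduct] at hde hee
  rw [fderiv_surface_apply c hh he, dot3_eq_dotProduct, sub_dotProduct, add_dotProduct,
    smul_dotProduct, smul_dotProduct, hde, hee, ← dot3_eq_dotProduct, dot3_lift2_left,
    fderiv_apply_eq_pd, hgrad.1, hgrad.2]
  simp only [smul_eq_mul]
  ring

end

/-- The surface `g(x) = (x,0) + (C̃ - h(x)) e(x)` is orthogonal to the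
unit field `e(x) = (∇h(x), e₃(x))`. -/
theorem orthogonal_surface_to_field
    (Ω : Set (Fin 2 → ℝ)) (hΩ : IsOpen Ω)
    (h : (Fin 2 → ℝ) → ℝ) (hh : ContDiffOn ℝ 2 h Ω)
    (e : (Fin 2 → ℝ) → (Fin 3 → ℝ)) (he : ContDiffOn ℝ 1 e Ω)
    (hgrad : ∀ x ∈ Ω, e x 0 = pd 0 h x ∧ e x 1 = pd 1 h x)
    (heunit : ∀ x ∈ Ω, norm3 (e x) = 1)
    (Ct : ℝ)
    (g : (Fin 2 → ℝ) → (Fin 3 → ℝ)) (hg : ∀ x, g x = lift2 x + (Ct - h x) • e x) :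
    ∀ x ∈ Ω, ∀ i : Fin 2, dot3 (fderiv ℝ g x (Pi.single i 1)) (e x) = 0 := by
  intro x hx i
  have hΩx : Ω ∈ 𝓝 x := hΩ.mem_nhds hx
  obtain rfl : g = fun y => lift2 y + (Ct - h y) • e y := funext hg
  have hunit : ∀ᶠ y in 𝓝 x, dot3 (e y) (e y) = 1 := by
    filter_upwards [hΩx] with y hy using Real.sqrt_eq_one.mp (heunit y hy)
  exact dot3_fderiv_surface_apply_eq_zero Ct
    ((hh.contDiffAt hΩx).differentiableAt two_ne_zero)
    ((he.contDiffAt hΩx).differentiableAt one_ne_zero) hunit (hgrad x hx) _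
end
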